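/- Let 0 ≤ α < 1/2 and M > 0 be fixed. Then the Mordell integral satisfies h(ατ; τ) ≪ 1 as τ → 0 within the cone {τ = u+iv : v > 0, |u| ≤ Mv}; that is, there exist constants C, δ > 0 such that |h(ατ; τ)| ≤ C for all τ in the cone with v < δ. -/

import Mathlib

/-!
On the real line `|e^{πiτx² - 2πzx}| = e^{-π (Im τ) x² - 2π (Re z) x}`, and completing the square
bounds this by `e^{π (Re z)² / Im τ}`, so `|h(z;τ)| ≤ e^{π (Re z)² / Im τ} ∫_ℝ sech(πx) dx`.
For `z = ατ` with `τ = u + iv` in the cone, `(Re z)² / Im τ = α²u²/v ≤ α²M²v`, which stays bounded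
as `v → 0`.
-/

open Real Complex MeasureTheory

/-- The Mordell integral `h(z;τ) = ∫_ℝ e^{πiτx² - 2πzx} / cosh(πx) dx`. -/
noncomputable def mordellH (z τ : ℂ) : ℂ :=
  ∫ x : ℝ, Complex.exp ((π : ℂ) * Complex.I * τ * (x : ℂ) ^ 2 - 2 * (π : ℂ) * z * (x : ℂ)) /
    Complex.cosh ((π : ℂ) * (x : ℂ))

lemma Real.inv_cosh_le_two_mul_exp_neg (t : ℝ) : (Real.cosh t)⁻¹ ≤ 2 * Real.exp (-t) := by
  rw [inv_le_iff_one_le_mul₀ (Real.cosh_pos t), Real.cosh_eq]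
  have h : Real.exp (-t) * Real.exp t = 1 := by rw [← Real.exp_add, neg_add_cancel, Real.exp_zero]
  nlinarith [mul_pos (Real.exp_pos (-t)) (Real.exp_pos (-t))]

lemma integrable_inv_cosh_pi_mul : Integrable fun x : ℝ => (Real.cosh (π * x))⁻¹ := by
  have hcont : Continuous fun x : ℝ => (Real.cosh (π * x))⁻¹ :=
    (Real.continuous_cosh.comp (continuous_const_mul π)).inv₀ fun x => (Real.cosh_pos _).ne'
  refine hcont.locallyIntegrable.integrable_of_isBigO_atTop_of_norm_isNegInvariant
    (g := fun x => Real.exp (-(π * x))) ?_ ?_ ?_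
  · filter_upwards with x
    simp [Real.cosh_neg, mul_neg]
  · refine Asymptotics.isBigO_of_le' (c := 2) _ fun x => ?_
    rw [Real.norm_of_nonneg (inv_nonneg.2 (Real.cosh_pos _).le),
      Real.norm_of_nonneg (Real.exp_pos _).le]
    exact Real.inv_cosh_le_two_mul_exp_neg _
  · refine ⟨Set.Ioi 0, Filter.Ioi_mem_atTop 0, ?_⟩
    simpa [neg_mul] using exp_neg_integrableOn_Ioi 0 Real.pi_pos

lemma integral_inv_cosh_pi_mul_pos : 0 < ∫ x : ℝ, (Real.cosh (π * x))⁻¹ := by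
  rw [integral_pos_iff_support_of_nonneg (fun x => inv_nonneg.2 (Real.cosh_pos _).le)
    integrable_inv_cosh_pi_mul, Function.support_eq_univ fun x => (inv_pos.2 (Real.cosh_pos _)).ne']
  simp

lemma neg_mul_sq_sub_two_mul_le_sq_div {v : ℝ} (hv : 0 < v) (a x : ℝ) :
    -(v * x ^ 2) - 2 * a * x ≤ a ^ 2 / v := by
  rw [le_div_iff₀ hv]
  nlinarith [sq_nonneg (v * x + a)]

lemma norm_mordellH_le (z τ : ℂ) (hτ : 0 < τ.im) :
    ‖mordellH z τ‖ ≤ Real.exp (π * z.re ^ 2 / τ.im) * ∫ x : ℝ, (Real.cosh (π * x))⁻¹ := by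
  rw [← integral_const_mul]
  refine norm_integral_le_of_norm_le (integrable_inv_cosh_pi_mul.const_mul _)
    (.of_forall fun x => ?_)
  have hcosh : Complex.cosh (π * x) = (Real.cosh (π * x) : ℂ) := by push_cast; rfl
  have hre : ((π : ℂ) * I * τ * (x : ℂ) ^ 2 - 2 * π * z * x).re
      = -(π * τ.im * x ^ 2) - 2 * π * z.re * x := by
    simp [pow_two]
  rw [norm_div, hcosh, Complex.norm_real, Real.norm_of_nonneg (Real.cosh_pos _).le,
    Complex.norm_exp, hre, div_eq_mul_inv]
  gcongr
  calc -(π * τ.im * x ^ 2) - 2 * π * z.re * x = π * (-(τ.im * x ^ 2) - 2 * z.re * x) := by ring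
    _ ≤ π * (z.re ^ 2 / τ.im) := by gcongr; exact neg_mul_sq_sub_two_mul_le_sq_div hτ _ _
    _ = π * z.re ^ 2 / τ.im := by ring

theorem mordell_bounded_general (α M : ℝ) :
    ∃ C > (0 : ℝ), ∃ δ > (0 : ℝ), ∀ u v : ℝ, 0 < v → |u| ≤ M * v → v < δ →
      ‖mordellH ((α : ℂ) * ((u : ℂ) + (v : ℂ) * Complex.I)) ((u : ℂ) + (v : ℂ) * Complex.I)‖
        ≤ C := by
  refine ⟨Real.exp (π * (α * M) ^ 2) * ∫ x : ℝ, (Real.cosh (π * x))⁻¹,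
    mul_pos (Real.exp_pos _) integral_inv_cosh_pi_mul_pos,
    1, one_pos, fun u v hv hu hv1 => ?_⟩
  have hcone : (α * u) ^ 2 / v ≤ (α * M) ^ 2 := by
    have hu2 : u ^ 2 ≤ (M * v) ^ 2 := sq_le_sq' (abs_le.1 hu).1 (abs_le.1 hu).2
    rw [div_le_iff₀ hv]
    nlinarith [sq_nonneg α, sq_nonneg M, mul_nonneg (sq_nonneg (α * M)) hv.le]
  calc _ ≤ Real.exp (π * (α * u) ^ 2 / v) * ∫ x : ℝ, (Real.cosh (π * x))⁻¹ := by
        simpa using norm_mordellH_le (α * (u + v * I)) (u + v * I) (by simpa using hv)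
    _ ≤ _ := by
        gcongr
        rw [mul_div_assoc]
        gcongr

/-- For `0 ≤ α < 1/2`, `h(ατ;τ) ≪ 1` as `τ → 0` in a cone. -/
theorem mordell_bounded (α M : ℝ) (hα0 : 0 ≤ α) (hα1 : α < 1 / 2) (hM : 0 < M) :
    ∃ C > (0 : ℝ), ∃ δ > (0 : ℝ), ∀ u v : ℝ, 0 < v → |u| ≤ M * v → v < δ →
      ‖mordellH ((α : ℂ) * ((u : ℂ) + (v : ℂ) * Complex.I)) ((u : ℂ) + (v : ℂ) * Complex.I)‖
        ≤ C :=
  mordell_bounded_general α M
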